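/- The map x ↦ J_n \ x is an involutive dual automorphism of the permutohedron P(n), sending each clopen set x to a lattice-theoretical complement of x in P(n). In particular, P(n) is a complemented lattice. -/

import Mathlib

/-- `J_n = {(i,j) : 1 ≤ i < j ≤ n}`. -/
def JnS (n : ℕ) : Set (ℕ × ℕ) := {p | 1 ≤ p.1 ∧ p.1 < p.2 ∧ p.2 ≤ n}

/-- Transitivity of a set of pairs, viewed as a binary relation. -/
def TransSet (x : Set (ℕ × ℕ)) : Prop := ∀ i j k : ℕ, (i, j) ∈ x → (j, k) ∈ x → (i, k) ∈ x

/-- A subset of `J_n` is closed if it is transitive. -/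
def ClosedIn (n : ℕ) (x : Set (ℕ × ℕ)) : Prop := x ⊆ JnS n ∧ TransSet x

/-- A subset of `J_n` is clopen if both it and its complement in `J_n` are closed. -/
def ClopenIn (n : ℕ) (x : Set (ℕ × ℕ)) : Prop := ClosedIn n x ∧ ClosedIn n (JnS n \ x)

/-- The transitive closure of a set of pairs. -/
def clS (x : Set (ℕ × ℕ)) : Set (ℕ × ℕ) :=
  {p | Relation.TransGen (fun a b => (a, b) ∈ x) p.1 p.2}

/-- The interior: the largest open subset of `x`. -/
def intS (n : ℕ) (x : Set (ℕ × ℕ)) : Set (ℕ × ℕ) := JnS n \ clS (JnS n \ x)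

/-! Since `x` and `J_n \ x` are disjoint and cover `J_n`, their meet is the interior of `∅` and
their join is the closure of `J_n`; both are trivial because `J_n` itself is transitive. -/

lemma transSet_JnS (n : ℕ) : TransSet (JnS n) :=
  fun _ _ _ hij hjk => ⟨hij.1, hij.2.1.trans hjk.2.1, hjk.2.2⟩

lemma clS_eq_self {x : Set (ℕ × ℕ)} (hx : TransSet x) : clS x = x := by
  have : IsTrans ℕ (fun a b => (a, b) ∈ x) := ⟨hx⟩
  ext p
  simp only [clS, Set.mem_ofPred_eq, Relation.transGen_eq_self]

lemma intS_empty (n : ℕ) : intS n ∅ = ∅ := by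
  rw [intS, Set.sdiff_empty, clS_eq_self (transSet_JnS n), Set.sdiff_self]

lemma ClopenIn.diff {n : ℕ} {x : Set (ℕ × ℕ)} (hx : ClopenIn n x) : ClopenIn n (JnS n \ x) :=
  ⟨hx.2, by rw [Set.sdiff_sdiff_cancel_left hx.1.1]; exact hx.1⟩

/-- The map `x ↦ J_n \ x` is an involutive dual automorphism of the permutohedron `P(n)`,
sending each clopen set `x` to a lattice-theoretical complement of `x`; so `P(n)` is a
complemented lattice. -/
theorem stmt3 (n : ℕ) :
    (∀ x, ClopenIn n x → ClopenIn n (JnS n \ x)) ∧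
    (∀ x, ClopenIn n x → JnS n \ (JnS n \ x) = x) ∧
    (∀ x y, ClopenIn n x → ClopenIn n y → (x ⊆ y ↔ JnS n \ y ⊆ JnS n \ x)) ∧
    (∀ x, ClopenIn n x →
      intS n (x ∩ (JnS n \ x)) = ∅ ∧ clS (x ∪ (JnS n \ x)) = JnS n) := by
  refine ⟨fun x hx => hx.diff, fun x hx => Set.sdiff_sdiff_cancel_left hx.1.1,
    fun x y hx hy => (Set.sdiff_subset_sdiff_iff_subset hy.1.1 hx.1.1).symm, fun x hx => ⟨?_, ?_⟩⟩
  · rw [Set.inter_sdiff_self, intS_empty]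
  · rw [Set.union_sdiff_cancel hx.1.1, clS_eq_self (transSet_JnS n)]
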